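/- arXiv:2406.12727 — 8 statements merged into one kernel-verified Lean document; each statement's English description precedes it below -/
import Mathlib

section
/- Let k ≥ 4 be an even integer and let X_1, …, X_n be k-wise independent random variables taking values in [0,1]. Let X = X_1 + … + X_n and let μ be a real number with μ ≤ E[X] and μ ≥ k. Then for every ε > 0, Pr[|X − E[X]| ≥ ε·E[X]] ≤ 8·(2k/(ε²·μ))^{k/2}. -/
/-!
Center the variables, `Y i = X i - E[X i]`, and apply Markov's inequality to the `k`-th power of
`S = ∑ Y i`. Expanding `E[S ^ k]` as a sum over words `f : Fin k → Fin n`, `k`-wise independence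
factors each term over the letters of the word. A letter occurring once contributes
`E[Y i] = 0`, and a letter occurring at least twice contributes at most `E[Y i ^ 2] ≤ E[X i]`.
Grouping the surviving words by their set of `r ≤ k / 2` letters gives
`E[S ^ k] ≤ ∑ r ^ k / r! * E[X] ^ r`, and `r ^ r / r! ≤ e ^ r` bounds this by
`2 * (e * k * E[X] / 2) ^ (k / 2)` once `E[X] ≥ k`.
-/

open MeasureTheory ProbabilityTheory

/-- A finite family of random variables is `k`-wise independent if every subfamily of at most
`k` of them is mutually independent. -/
def KWiseIndepFun {Ω ι β : Type*} [MeasurableSpace Ω] [MeasurableSpace β]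
    (k : ℕ) (X : ι → Ω → β) (P : Measure Ω) : Prop :=
  ∀ S : Finset ι, S.card ≤ k →
    iIndepFun (fun i : S => X i) P

open Finset Real
open scoped Nat

lemma pow_two_mul_div_factorial_mul_pow_le {m r : ℕ} (hrm : r ≤ m) {V E : ℝ} (hV : 0 ≤ V)
    (hVE : V ≤ E) (hE : 2 * m ≤ E) :
    (r : ℝ) ^ (2 * m) / r ! * V ^ r ≤ (exp 1 * m * E) ^ m * 2 ^ r / 2 ^ m := by
  obtain ⟨d, rfl⟩ := Nat.exists_eq_add_of_le hrm
  set M : ℝ := ((r + d : ℕ) : ℝ)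
  have hfac : (r : ℝ) ^ r / r ! ≤ exp 1 ^ r := by
    rw [exp_one_pow]; exact pow_div_factorial_le_exp _ (Nat.cast_nonneg r) r
  have hrM : (r : ℝ) ≤ M := by simp [M]
  have h2ME : (2 * M) ^ d ≤ E ^ d := pow_le_pow_left₀ (by positivity) hE d
  have he : 1 ≤ exp 1 := one_le_exp zero_le_one
  rw [pow_add 2 r d, ← div_div, mul_div_cancel_right₀ _ (by positivity),
    le_div_iff₀ (by positivity)]
  calc (r : ℝ) ^ (2 * (r + d)) / r ! * V ^ r * 2 ^ d
      = (r ^ r / r !) * r ^ (r + 2 * d) * V ^ r * 2 ^ d := by ring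
    _ ≤ exp 1 ^ r * M ^ (r + 2 * d) * E ^ r * 2 ^ d := by gcongr
    _ = exp 1 ^ r * M ^ (r + d) * E ^ r * (2 * M) ^ d := by ring
    _ ≤ exp 1 ^ (r + d) * M ^ (r + d) * E ^ r * E ^ d := by
      have hE0 : 0 ≤ E := le_trans (by positivity) hE
      gcongr
    _ = (exp 1 * M * E) ^ (r + d) := by ring

lemma sum_pow_two_mul_div_factorial_mul_pow_le {m : ℕ} {V E : ℝ} (hV : 0 ≤ V) (hVE : V ≤ E)
    (hE : 2 * m ≤ E) :
    ∑ r ∈ range (m + 1), (r : ℝ) ^ (2 * m) / r ! * V ^ r ≤ 2 * (exp 1 * m * E) ^ m := by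
  have hE0 : 0 ≤ E := le_trans (by positivity) hE
  calc ∑ r ∈ range (m + 1), (r : ℝ) ^ (2 * m) / r ! * V ^ r
      ≤ ∑ r ∈ range (m + 1), (exp 1 * m * E) ^ m * 2 ^ r / 2 ^ m :=
        sum_le_sum fun r hr => pow_two_mul_div_factorial_mul_pow_le
          (Nat.lt_succ_iff.1 (mem_range.1 hr)) hV hVE hE
    _ = (exp 1 * m * E) ^ m / 2 ^ m * (2 ^ (m + 1) - 1) := by
      rw [← sum_div, ← mul_sum, geom_sum_eq (by norm_num)]; ring
    _ ≤ 2 * (exp 1 * m * E) ^ m := by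
      rw [pow_succ, div_mul_eq_mul_div, div_le_iff₀ (by positivity)]
      nlinarith [show 0 ≤ (exp 1 * m * E) ^ m by positivity]

section Words
variable {ι : Type*} [DecidableEq ι]

lemma two_mul_card_image_le_of_two_le_card_fiber {k : ℕ} {f : Fin k → ι}
    (hf : ∀ i ∈ image f univ, 2 ≤ #{j | f j = i}) : 2 * #(image f univ) ≤ k := by
  calc 2 * #(image f univ) = ∑ _i ∈ image f univ, 2 := by rw [sum_const, smul_eq_mul, mul_comm]
    _ ≤ ∑ i ∈ image f univ, #{j | f j = i} := sum_le_sum hf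
    _ = k := by
      rw [← card_eq_sum_card_image, card_univ, Fintype.card_fin]

variable [Fintype ι]

lemma factorial_mul_sum_powersetCard_prod_le {v : ι → ℝ} (hv : ∀ i, 0 ≤ v i) (r : ℕ) :
    r ! * ∑ B ∈ powersetCard r univ, ∏ i ∈ B, v i ≤ (∑ i, v i) ^ r := by
  -- the squarefree monomials of the multinomial expansion have coefficient `r !`
  let ind : Finset ι → ι → ℕ := fun B i => if i ∈ B then 1 else 0
  have hind : Set.InjOn ind ↑(powersetCard r (univ : Finset ι)) := fun B _ C _ h => by
    ext i
    have := congrFun h i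
    simp only [ind] at this
    split_ifs at this <;> simp_all
  have hmaps : ∀ B ∈ powersetCard r univ, ind B ∈ piAntidiag univ r := fun B hB => by
    simpa [ind, sum_boole] using (mem_powersetCard.1 hB).2
  have hterm : ∀ B ∈ powersetCard r univ,
      r ! * ∏ i ∈ B, v i = Nat.multinomial univ (ind B) * ∏ i, v i ^ ind B i := fun B hB => by
    have hmult : Nat.multinomial univ (ind B) = r ! := by
      simp [Nat.multinomial, ind, apply_ite Nat.factorial, (mem_powersetCard.1 hB).2]
    simp [hmult, ind, pow_ite, prod_ite_mem]
  rw [sum_pow_eq_sum_piAntidiag, mul_sum, sum_congr rfl hterm,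
    ← sum_image (f := fun k => (Nat.multinomial univ k : ℝ) * ∏ i, v i ^ k i) hind]
  exact sum_le_sum_of_subset_of_nonneg (image_subset_iff.2 hmaps) fun k _ _ =>
    mul_nonneg (Nat.cast_nonneg _) (prod_nonneg fun i _ => pow_nonneg (hv i) _)

lemma card_filter_image_univ_eq_le {k : ℕ} (B : Finset ι) :
    #{f : Fin k → ι | image f univ = B} ≤ #B ^ k :=
  calc #{f : Fin k → ι | image f univ = B}
      ≤ #(Fintype.piFinset fun _ : Fin k => B) := card_le_card fun f hf =>
        Fintype.mem_piFinset.2 fun j => (mem_filter.1 hf).2 ▸ mem_image_of_mem f (mem_univ j)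
    _ = #B ^ k := by simp

lemma sum_prod_image_le_of_two_le_card_fiber {k m : ℕ} (hkm : k ≤ 2 * m) {v : ι → ℝ}
    (hv : ∀ i, 0 ≤ v i) (s : Finset (Fin k → ι))
    (hs : ∀ f ∈ s, ∀ i ∈ image f univ, 2 ≤ #{j | f j = i}) :
    ∑ f ∈ s, ∏ i ∈ image f univ, v i ≤ ∑ r ∈ range (m + 1), (r : ℝ) ^ k / r ! * (∑ i, v i) ^ r := by
  set T := s.image (image · univ)
  have hT : ∀ B ∈ T, #B ∈ range (m + 1) := by
    simp only [T, mem_image, mem_range]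
    rintro _ ⟨f, hf, rfl⟩
    have := two_mul_card_image_le_of_two_le_card_fiber (hs f hf)
    omega
  have hw : ∀ B : Finset ι, 0 ≤ ∏ i ∈ B, v i := fun B => prod_nonneg fun i _ => hv i
  calc ∑ f ∈ s, ∏ i ∈ image f univ, v i
      = ∑ B ∈ T, #{f ∈ s | image f univ = B} • ∏ i ∈ B, v i :=
        sum_comp (fun B => ∏ i ∈ B, v i) (image · univ)
    _ ≤ ∑ B ∈ T, (#B ^ k : ℕ) * ∏ i ∈ B, v i := by
      refine sum_le_sum fun B _ => ?_
      rw [nsmul_eq_mul]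
      gcongr
      · exact hw B
      · exact (card_le_card (filter_subset_filter _ (subset_univ s))).trans
          (card_filter_image_univ_eq_le B)
    _ = ∑ r ∈ range (m + 1), ∑ B ∈ T with #B = r, (#B ^ k : ℕ) * ∏ i ∈ B, v i :=
      (sum_fiberwise_of_maps_to hT _).symm
    _ ≤ ∑ r ∈ range (m + 1), ∑ B ∈ powersetCard r univ, (r : ℝ) ^ k * ∏ i ∈ B, v i := by
      refine sum_le_sum fun r _ => ?_
      calc ∑ B ∈ T with #B = r, (#B ^ k : ℕ) * ∏ i ∈ B, v i
          = ∑ B ∈ T with #B = r, (r : ℝ) ^ k * ∏ i ∈ B, v i :=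
            sum_congr rfl fun B hB => by rw [(mem_filter.1 hB).2]; push_cast; rfl
        _ ≤ _ := sum_le_sum_of_subset_of_nonneg
            (fun B hB => mem_powersetCard.2 ⟨subset_univ B, (mem_filter.1 hB).2⟩)
            fun B _ _ => mul_nonneg (by positivity) (hw B)
    _ ≤ ∑ r ∈ range (m + 1), (r : ℝ) ^ k / r ! * (∑ i, v i) ^ r := by
      refine sum_le_sum fun r _ => ?_
      rw [← mul_sum, div_mul_eq_mul_div, le_div_iff₀ (by positivity), mul_assoc]
      gcongr
      rw [mul_comm]
      exact factorial_mul_sum_powersetCard_prod_le hv r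

end Words

section Probability
variable {Ω : Type*} [MeasurableSpace Ω] {P : Measure Ω}

lemma KWiseIndepFun.comp {ι β γ : Type*} [MeasurableSpace β] [MeasurableSpace γ] {k : ℕ}
    {X : ι → Ω → β} (h : KWiseIndepFun k X P) (g : ι → β → γ) (hg : ∀ i, Measurable (g i)) :
    KWiseIndepFun k (fun i => g i ∘ X i) P :=
  fun S hS => (h S hS).comp (fun i => g i) fun i => hg i

lemma KWiseIndepFun.integral_prod_comp_eq_prod_integral_pow {ι : Type*} [DecidableEq ι] {k : ℕ}
    {Y : ι → Ω → ℝ} (h : KWiseIndepFun k Y P) (hY : ∀ i, Measurable (Y i)) (f : Fin k → ι) :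
    ∫ ω, ∏ j, Y (f j) ω ∂P = ∏ i ∈ image f univ, ∫ ω, Y i ω ^ #{j | f j = i} ∂P := by
  have hcard : #(image f univ) ≤ k := card_image_le.trans (by simp)
  have hpow := (h _ hcard).comp (fun i x => x ^ #{j | f j = i.1})
    fun _ => measurable_id.pow_const _
  calc ∫ ω, ∏ j, Y (f j) ω ∂P
      = ∫ ω, ∏ i : image f univ, Y i ω ^ #{j | f j = i.1} ∂P := by
        congr 1 with ω
        rw [prod_coe_sort (image f univ) fun i => Y i ω ^ #{j | f j = i}]
        exact prod_comp (fun i => Y i ω) f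
    _ = ∏ i : image f univ, ∫ ω, Y i ω ^ #{j | f j = i.1} ∂P :=
        hpow.integral_fun_prod_eq_prod_integral fun i => ((hY i).pow_const _).aestronglyMeasurable
    _ = ∏ i ∈ image f univ, ∫ ω, Y i ω ^ #{j | f j = i} ∂P :=
        prod_coe_sort (image f univ) fun i => ∫ ω, Y i ω ^ #{j | f j = i} ∂P

lemma variance_le_integral_of_mem_Icc_zero_one [IsProbabilityMeasure P] {X : Ω → ℝ}
    (hX : AEMeasurable X P) (h : ∀ᵐ ω ∂P, X ω ∈ Set.Icc (0 : ℝ) 1) : variance X P ≤ P[X] := by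
  nlinarith [variance_le_sub_mul_sub h hX, sq_nonneg P[X]]

variable [IsFiniteMeasure P]

lemma abs_integral_pow_le_integral_sq {Y : Ω → ℝ} (hY : Measurable Y) (hY1 : ∀ ω, |Y ω| ≤ 1)
    {n : ℕ} (hn : 2 ≤ n) : |∫ ω, Y ω ^ n ∂P| ≤ ∫ ω, Y ω ^ 2 ∂P := by
  have hsq : Integrable (fun ω => Y ω ^ 2) P := Integrable.of_bound
    (hY.pow_const 2).aestronglyMeasurable 1 (ae_of_all _ fun ω => by
      rw [Real.norm_eq_abs, abs_pow]; exact pow_le_one₀ (abs_nonneg _) (hY1 ω))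
  calc |∫ ω, Y ω ^ n ∂P| ≤ ∫ ω, |Y ω ^ n| ∂P := abs_integral_le_integral_abs
    _ ≤ ∫ ω, Y ω ^ 2 ∂P := integral_mono_of_nonneg (ae_of_all _ fun _ => abs_nonneg _) hsq
        (ae_of_all _ fun ω => by
          simpa [abs_pow, sq_abs] using pow_le_pow_of_le_one (abs_nonneg _) (hY1 ω) hn)

lemma measureReal_le_abs_le_integral_pow_div {S : Ω → ℝ} {k : ℕ} (hk : Even k)
    (hS : Integrable (fun ω => S ω ^ k) P) {a : ℝ} (ha : 0 < a) :
    P.real {ω | a ≤ |S ω|} ≤ (∫ ω, S ω ^ k ∂P) / a ^ k := by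
  have hsub : {ω | a ≤ |S ω|} ⊆ {ω | a ^ k ≤ S ω ^ k} := fun ω hω => by
    show a ^ k ≤ S ω ^ k
    exact hk.pow_abs (S ω) ▸ pow_le_pow_left₀ ha.le hω k
  rw [le_div_iff₀ (pow_pos ha k), mul_comm]
  calc a ^ k * P.real {ω | a ≤ |S ω|} ≤ a ^ k * P.real {ω | a ^ k ≤ S ω ^ k} :=
        mul_le_mul_of_nonneg_left (measureReal_mono hsub) (by positivity)
    _ ≤ ∫ ω, S ω ^ k ∂P :=
        mul_meas_ge_le_integral_of_nonneg (ae_of_all _ fun ω => hk.pow_nonneg _) hS _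

lemma KWiseIndepFun.integral_sum_pow_le {ι : Type*} [Fintype ι] {m : ℕ} {Y : ι → Ω → ℝ}
    (h : KWiseIndepFun (2 * m) Y P) (hY : ∀ i, Measurable (Y i)) (hY1 : ∀ i ω, |Y i ω| ≤ 1)
    (hY0 : ∀ i, ∫ ω, Y i ω ∂P = 0) :
    ∫ ω, (∑ i, Y i ω) ^ (2 * m) ∂P
      ≤ ∑ r ∈ range (m + 1), (r : ℝ) ^ (2 * m) / r ! * (∑ i, ∫ ω, Y i ω ^ 2 ∂P) ^ r := by
  classical
  set s : Finset (Fin (2 * m) → ι) := {f | ∀ i ∈ image f univ, 2 ≤ #{j | f j = i}}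
  have hint : ∀ f : Fin (2 * m) → ι, Integrable (fun ω => ∏ j, Y (f j) ω) P := fun f =>
    Integrable.of_bound (Finset.measurable_prod _ fun j _ => hY (f j)).aestronglyMeasurable 1
      (ae_of_all _ fun ω => by
        rw [Real.norm_eq_abs, abs_prod]
        exact prod_le_one (fun _ _ => abs_nonneg _) fun j _ => hY1 _ ω)
  have hvanish : ∀ f ∉ s, ∏ i ∈ image f univ, ∫ ω, Y i ω ^ #{j | f j = i} ∂P = 0 := by
    intro f hf
    simp only [s, mem_filter, mem_univ, true_and, not_forall, not_le] at hf
    obtain ⟨i, hi, hlt⟩ := hf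
    have hpos : 0 < #{j | f j = i} := by
      obtain ⟨j, -, rfl⟩ := mem_image.1 hi
      exact card_pos.2 ⟨j, by simp⟩
    refine prod_eq_zero hi ?_
    rw [show #{j | f j = i} = 1 by omega]
    simpa using hY0 i
  calc ∫ ω, (∑ i, Y i ω) ^ (2 * m) ∂P = ∑ f : Fin (2 * m) → ι, ∫ ω, ∏ j, Y (f j) ω ∂P := by
        simp_rw [Fintype.sum_pow]
        exact integral_finsetSum _ fun f _ => hint f
    _ = ∑ f, ∏ i ∈ image f univ, ∫ ω, Y i ω ^ #{j | f j = i} ∂P :=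
        sum_congr rfl fun f _ => h.integral_prod_comp_eq_prod_integral_pow hY f
    _ = ∑ f ∈ s, ∏ i ∈ image f univ, ∫ ω, Y i ω ^ #{j | f j = i} ∂P :=
        (sum_subset (subset_univ s) fun f _ hf => hvanish f hf).symm
    _ ≤ ∑ f ∈ s, ∏ i ∈ image f univ, ∫ ω, Y i ω ^ 2 ∂P :=
        sum_le_sum fun f hf => (le_abs_self _).trans <| (abs_prod _ _).le.trans <|
          prod_le_prod (fun _ _ => abs_nonneg _) fun i hi =>
            abs_integral_pow_le_integral_sq (hY i) (hY1 i) ((mem_filter.1 hf).2 i hi)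
    _ ≤ _ := sum_prod_image_le_of_two_le_card_fiber le_rfl
        (fun i => integral_nonneg fun ω => sq_nonneg _) s fun f hf => (mem_filter.1 hf).2

lemma integrable_sum_pow_of_abs_le_one {ι : Type*} [Fintype ι] {Y : ι → Ω → ℝ}
    (hY : ∀ i, Measurable (Y i)) (hY1 : ∀ i ω, |Y i ω| ≤ 1) (k : ℕ) :
    Integrable (fun ω => (∑ i, Y i ω) ^ k) P :=
  Integrable.of_bound (by fun_prop) (Fintype.card ι ^ k) (ae_of_all _ fun ω => by
    rw [norm_pow, Real.norm_eq_abs]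
    gcongr
    calc |∑ i, Y i ω| ≤ ∑ i, |Y i ω| := abs_sum_le_sum_abs _ _
      _ ≤ Fintype.card ι := by simpa using sum_le_sum fun i (_ : i ∈ univ) => hY1 i ω)

lemma KWiseIndepFun.measureReal_le_abs_sum_sub_integral_le [IsProbabilityMeasure P]
    {ι : Type*} [Fintype ι] {m : ℕ} {X : ι → Ω → ℝ} (h : KWiseIndepFun (2 * m) X P)
    (hX : ∀ i, Measurable (X i)) (h01 : ∀ i ω, X i ω ∈ Set.Icc (0 : ℝ) 1)
    (hm : (2 * m : ℝ) ≤ ∑ i, P[X i]) {a : ℝ} (ha : 0 < a) :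
    P.real {ω | a ≤ |∑ i, X i ω - ∑ i, P[X i]|}
      ≤ 2 * (exp 1 * m * ∑ i, P[X i]) ^ m / a ^ (2 * m) := by
  set Y : ι → Ω → ℝ := fun i ω => X i ω - ∫ ω', X i ω' ∂P
  have hXint : ∀ i, Integrable (X i) P := fun i =>
    Integrable.of_mem_Icc 0 1 (hX i).aemeasurable (ae_of_all _ (h01 i))
  have hmean : ∀ i, P[X i] ∈ Set.Icc (0 : ℝ) 1 := fun i =>
    ⟨integral_nonneg fun ω => (h01 i ω).1, by
      simpa using integral_mono (hXint i) (integrable_const 1) fun ω => (h01 i ω).2⟩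
  have hYmeas : ∀ i, Measurable (Y i) := fun i => (hX i).sub_const _
  have hY1 : ∀ i ω, |Y i ω| ≤ 1 := fun i ω => abs_sub_le_of_nonneg_of_le
    (h01 i ω).1 (h01 i ω).2 (hmean i).1 (hmean i).2
  have hY0 : ∀ i, ∫ ω, Y i ω ∂P = 0 := fun i => by
    simp [Y, integral_sub (hXint i) (integrable_const _)]
  have hvar : ∑ i, ∫ ω, Y i ω ^ 2 ∂P ≤ ∑ i, P[X i] := sum_le_sum fun i _ =>
    (variance_eq_integral (hX i).aemeasurable).symm.le.trans
      (variance_le_integral_of_mem_Icc_zero_one (hX i).aemeasurable (ae_of_all _ (h01 i)))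
  have hYind : KWiseIndepFun (2 * m) Y P :=
    h.comp (fun i x => x - ∫ ω, X i ω ∂P) fun _ => measurable_id.sub_const _
  have hdev : ∀ ω, ∑ i, X i ω - ∑ i, P[X i] = ∑ i, Y i ω := fun ω => by
    simp [Y, sum_sub_distrib]
  simp_rw [hdev]
  calc P.real {ω | a ≤ |∑ i, Y i ω|}
      ≤ (∫ ω, (∑ i, Y i ω) ^ (2 * m) ∂P) / a ^ (2 * m) :=
        measureReal_le_abs_le_integral_pow_div (even_two_mul m)
          (integrable_sum_pow_of_abs_le_one hYmeas hY1 _) ha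
    _ ≤ 2 * (exp 1 * m * ∑ i, P[X i]) ^ m / a ^ (2 * m) := by
        gcongr
        exact (hYind.integral_sum_pow_le hYmeas hY1 hY0).trans
          (sum_pow_two_mul_div_factorial_mul_pow_le
            (sum_nonneg fun i _ => integral_nonneg fun ω => sq_nonneg _) hvar hm)

end Probability

/-- **Bellare–Rompel tail bound.** Let `k ≥ 4` be an even integer and `X₁, …, Xₙ` be `k`-wise
independent random variables taking values in `[0,1]`. Let `X = X₁ + ⋯ + Xₙ` and let `μ` be a
real number with `μ ≤ E[X]` and `μ ≥ k`. Then for every `ε > 0`,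
`Pr[|X − E[X]| ≥ ε·E[X]] ≤ 8·(2k/(ε²·μ))^(k/2)`. -/
theorem bellare_rompel {Ω : Type*} [MeasurableSpace Ω] (P : Measure Ω) [IsProbabilityMeasure P]
    (n k : ℕ) (hk4 : 4 ≤ k) (hkeven : Even k)
    (X : Fin n → Ω → ℝ) (hXmeas : ∀ i, Measurable (X i))
    (hXrange : ∀ i ω, X i ω ∈ Set.Icc (0 : ℝ) 1)
    (hindep : KWiseIndepFun k X P)
    (μ : ℝ) (hμle : μ ≤ ∫ ω, (∑ i, X i ω) ∂P) (hμk : (k : ℝ) ≤ μ)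
    (ε : ℝ) (hε : 0 < ε) :
    (P {ω | ε * (∫ ω', (∑ i, X i ω') ∂P) ≤ |(∑ i, X i ω) - ∫ ω', (∑ i, X i ω') ∂P|}).toReal
      ≤ 8 * (2 * k / (ε ^ 2 * μ)) ^ ((k : ℝ) / 2) := by
  obtain ⟨m, rfl⟩ := even_iff_two_dvd.1 hkeven
  have hE : ∫ ω, ∑ i, X i ω ∂P = ∑ i, P[X i] := integral_finsetSum _ fun i _ =>
    Integrable.of_mem_Icc 0 1 (hXmeas i).aemeasurable (ae_of_all _ (hXrange i))
  rw [hE] at hμle ⊢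
  set E := ∑ i, P[X i]
  push_cast at hμk
  have hμ : 0 < μ := by linarith [show (4 : ℝ) ≤ 2 * m by exact_mod_cast hk4]
  have hE_pos : 0 < E := hμ.trans_le hμle
  calc (P {ω | ε * E ≤ |∑ i, X i ω - E|}).toReal
      ≤ 2 * (exp 1 * m * E) ^ m / (ε * E) ^ (2 * m) :=
        hindep.measureReal_le_abs_sum_sub_integral_le hXmeas hXrange (hμk.trans hμle)
          (by positivity)
    _ = 2 * (exp 1 * m / (ε ^ 2 * E)) ^ m := by
        rw [pow_mul, mul_div_assoc, ← div_pow]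
        congr 2
        field_simp
    _ ≤ 8 * (4 * m / (ε ^ 2 * μ)) ^ m := by
        gcongr
        · norm_num
        · exact (exp_one_lt_d9.trans (by norm_num)).le
    _ = 8 * (2 * ((2 * m : ℕ) : ℝ) / (ε ^ 2 * μ)) ^ (((2 * m : ℕ) : ℝ) / 2) := by
        rw [show ((2 * m : ℕ) : ℝ) / 2 = m by push_cast; ring, rpow_natCast]; push_cast; ring
end

section
/- Let d ≥ 1 be a real number with d^ε ≥ 4, let u be a bad vertex with deg(u) ∈ [d, 2d), and let k be an even integer with 4 ≤ k ≤ d^ε. Then the probability that u has more than d^{2ε} sampled neighbors, i.e., Pr[|N(u) ∩ V_samp| > d^{2ε}], is at most 8·(2k²/d^ε)^{k/2}. -/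
/-!
Factorial-moment method. Write `Y = |N(u) ∩ V_samp|` and `p_w = deg(w)^{-1/2}`. The binomial
coefficient `C(Y, k)` counts the fully sampled `k`-subsets of `N(u)`, so `k`-wise independence
gives `E[C(Y, k)] = e_k(p) ≤ μ^k / k!` with `μ = ∑_{w ∈ N(u)} p_w`, and `μ < deg(u)^ε ≤ 2d^ε`
because `u` is bad. Markov's inequality for `C(Y, k)` at `n = ⌊d^{2ε}⌋ + 1` yields
`Pr[Y ≥ n] ≤ μ^k / (k! C(n, k)) ≤ (μ / (n + 1 - k))^k ≤ (8 / (3d^ε))^k`, and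
`(8 / (3d^ε))^2 ≤ 2k² / d^ε`.
-/

open MeasureTheory ProbabilityTheory Finset
open scoped ENNReal Nat

theorem pow_add_mul_pow_le_add_pow {R : Type*} [CommSemiring R] [PartialOrder R]
    [IsOrderedRing R] {x y : R} (hx : 0 ≤ x) (hy : 0 ≤ y) (n : ℕ) :
    x ^ (n + 1) + (n + 1) * y * x ^ n ≤ (x + y) ^ (n + 1) := by
  rw [add_pow, sum_range_succ, sum_range_succ]
  have hrest : 0 ≤ ∑ m ∈ range n, x ^ m * y ^ (n + 1 - m) * ((n + 1).choose m : R) :=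
    sum_nonneg fun _ _ => by positivity
  have hn : n + 1 - n = 1 := by omega
  simp only [Nat.choose_self, Nat.choose_succ_self_right, hn, Nat.sub_self, pow_zero, pow_one,
    Nat.cast_one, mul_one]
  push_cast
  calc x ^ (n + 1) + (n + 1) * y * x ^ n
      = 0 + x ^ n * y * (n + 1) + x ^ (n + 1) := by ring
    _ ≤ _ := by gcongr

namespace Multiset

theorem esymm_cons_succ {R : Type*} [CommSemiring R] (a : R) (s : Multiset R) (n : ℕ) :
    (a ::ₘ s).esymm (n + 1) = s.esymm (n + 1) + a * s.esymm n := by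
  simp [esymm, powersetCard_cons, map_map, prod_cons, sum_map_mul_left]

theorem factorial_mul_esymm_le_sum_pow {R : Type*} [CommSemiring R] [PartialOrder R]
    [IsOrderedRing R] {s : Multiset R} (hs : ∀ a ∈ s, 0 ≤ a) (n : ℕ) :
    n ! * s.esymm n ≤ s.sum ^ n := by
  induction s using Multiset.induction_on generalizing n with
  | empty => cases n <;> simp [esymm, powersetCard_zero_right]
  | cons a s ih =>
    have ha : 0 ≤ a := hs a (mem_cons_self a s)
    have hs' : ∀ b ∈ s, 0 ≤ b := fun b hb => hs b (mem_cons_of_mem hb)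
    have hsum : 0 ≤ s.sum := sum_nonneg hs'
    cases n with
    | zero => simp [esymm]
    | succ n =>
      calc ((n + 1) ! : R) * (a ::ₘ s).esymm (n + 1)
          = (n + 1) ! * s.esymm (n + 1) + (n + 1) * a * (n ! * s.esymm n) := by
            rw [esymm_cons_succ, Nat.factorial_succ]; push_cast; ring
        _ ≤ s.sum ^ (n + 1) + (n + 1) * a * s.sum ^ n :=
            add_le_add (ih hs' _) (mul_le_mul_of_nonneg_left (ih hs' _)
              (mul_nonneg (add_nonneg n.cast_nonneg zero_le_one) ha))
        _ ≤ (a ::ₘ s).sum ^ (n + 1) := by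
            rw [sum_cons, add_comm a]; exact pow_add_mul_pow_le_add_pow hsum ha n

end Multiset

theorem Finset.powersetCard_filter {α : Type*} (p : α → Prop) [DecidablePred p] (s : Finset α)
    (n : ℕ) :
    (s.filter p).powersetCard n = (s.powersetCard n).filter (fun t => ∀ x ∈ t, p x) := by
  ext t
  simp only [mem_powersetCard, mem_filter, subset_iff]
  grind

section
variable {Ω ι β : Type*} [MeasurableSpace Ω] {P : Measure Ω}

theorem KWiseIndepFun.measure_biInter_preimage_eq_prod [MeasurableSpace β] {k : ℕ}
    {X : ι → Ω → β} (h : KWiseIndepFun k X P) {A : Finset ι} (hA : #A ≤ k) {B : ι → Set β}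
    (hB : ∀ i ∈ A, MeasurableSet (B i)) :
    P (⋂ i ∈ A, X i ⁻¹' B i) = ∏ i ∈ A, P (X i ⁻¹' B i) := by
  have := (h A hA).measure_inter_preimage_eq_mul univ (sets := fun i => B i)
    (fun i _ => hB i i.2)
  simpa [Set.iInter_subtype, prod_attach A fun i => P (X i ⁻¹' B i)] using this

variable [DecidableEq ι] {T : Ω → Finset ι}

theorem KWiseIndepFun.measure_subset_eq_prod {k : ℕ}
    (h : KWiseIndepFun k (fun i ω => if i ∈ T ω then (1 : ℝ) else 0) P) {A : Finset ι}
    (hA : #A ≤ k) : P {ω | A ⊆ T ω} = ∏ i ∈ A, P {ω | i ∈ T ω} := by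
  have hpre : ∀ i, (fun ω => if i ∈ T ω then (1 : ℝ) else 0) ⁻¹' {1} = {ω | i ∈ T ω} := by
    intro i; ext ω; by_cases hi : i ∈ T ω <;> simp [hi]
  have := h.measure_biInter_preimage_eq_prod hA (B := fun _ => {1})
    (fun _ _ => measurableSet_singleton 1)
  simp only [hpre] at this
  rw [← this]
  congr 1
  ext ω
  simp [subset_iff]

theorem choose_mul_measure_le_sum_measure_subset (hT : ∀ i, MeasurableSet {ω | i ∈ T ω})
    (S : Finset ι) (n k : ℕ) :
    (n.choose k : ℝ≥0∞) * P {ω | n ≤ #(S.filter (· ∈ T ω))}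
      ≤ ∑ A ∈ S.powersetCard k, P {ω | A ⊆ T ω} := by
  have hmeas : ∀ A : Finset ι, MeasurableSet {ω | A ⊆ T ω} := fun A => by
    simpa only [subset_iff, Set.ofPred_forall] using A.measurableSet_biInter fun i _ => hT i
  set f : Ω → ℝ≥0∞ := fun ω => ∑ A ∈ S.powersetCard k, {ω | A ⊆ T ω}.indicator 1 ω
  have hf : ∀ ω, f ω = (#(S.filter (· ∈ T ω))).choose k := fun ω => by
    rw [← card_powersetCard, powersetCard_filter, card_filter]
    push_cast
    exact sum_congr rfl fun A _ => by simp [Set.indicator_apply, subset_iff]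
  calc (n.choose k : ℝ≥0∞) * P {ω | n ≤ #(S.filter (· ∈ T ω))}
      ≤ (n.choose k : ℝ≥0∞) * P {ω | (n.choose k : ℝ≥0∞) ≤ f ω} := by
        gcongr with ω
        rw [hf]
        exact fun hω => by exact_mod_cast Nat.choose_le_choose k hω
    _ ≤ ∫⁻ ω, f ω ∂P :=
        mul_meas_ge_le_lintegral₀ (Finset.measurable_sum _ fun A _ =>
          measurable_one.indicator (hmeas A)).aemeasurable _
    _ = ∑ A ∈ S.powersetCard k, P {ω | A ⊆ T ω} := by
        rw [lintegral_finsetSum _ fun A _ => measurable_one.indicator (hmeas A)]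
        exact sum_congr rfl fun A _ => lintegral_indicator_one (hmeas A)

theorem KWiseIndepFun.pow_mul_measure_le_sum_pow (hT : ∀ i, MeasurableSet {ω | i ∈ T ω})
    {k : ℕ}
    (h : KWiseIndepFun k (fun i ω => if i ∈ T ω then (1 : ℝ) else 0) P) (S : Finset ι) (n : ℕ) :
    ((n + 1 - k : ℕ) : ℝ≥0∞) ^ k * P {ω | n ≤ #(S.filter (· ∈ T ω))}
      ≤ (∑ i ∈ S, P {ω | i ∈ T ω}) ^ k := by
  calc ((n + 1 - k : ℕ) : ℝ≥0∞) ^ k * P {ω | n ≤ #(S.filter (· ∈ T ω))}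
      ≤ (k ! * n.choose k : ℕ) * P {ω | n ≤ #(S.filter (· ∈ T ω))} := by
        rw [← Nat.descFactorial_eq_factorial_mul_choose, ← Nat.cast_pow]
        gcongr
        exact Nat.pow_sub_le_descFactorial n k
    _ ≤ k ! * ∑ A ∈ S.powersetCard k, ∏ i ∈ A, P {ω | i ∈ T ω} := by
        rw [Nat.cast_mul, mul_assoc]
        gcongr
        refine (choose_mul_measure_le_sum_measure_subset hT S n k).trans_eq
          (sum_congr rfl fun A hA => ?_)
        exact h.measure_subset_eq_prod (mem_powersetCard.1 hA).2.le
    _ ≤ (∑ i ∈ S, P {ω | i ∈ T ω}) ^ k := by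
        rw [← esymm_map_val, ← sum_map_val]
        exact Multiset.factorial_mul_esymm_le_sum_pow (fun _ _ => zero_le) k

theorem KWiseIndepFun.measureReal_mul_pow_le_sum_pow [IsFiniteMeasure P]
    (hT : ∀ i, MeasurableSet {ω | i ∈ T ω}) {k : ℕ}
    (h : KWiseIndepFun k (fun i ω => if i ∈ T ω then (1 : ℝ) else 0) P) (S : Finset ι) (n : ℕ) :
    P.real {ω | n ≤ #(S.filter (· ∈ T ω))} * ((n + 1 - k : ℕ) : ℝ) ^ k
      ≤ (∑ i ∈ S, P.real {ω | i ∈ T ω}) ^ k := by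
  have := ENNReal.toReal_mono
    (ENNReal.pow_ne_top (ENNReal.sum_ne_top.2 fun i _ => measure_ne_top P _))
    (h.pow_mul_measure_le_sum_pow hT S n)
  rwa [ENNReal.toReal_mul, ENNReal.toReal_pow, ENNReal.toReal_pow,
    ENNReal.toReal_sum fun i _ => measure_ne_top P _, ENNReal.toReal_natCast, mul_comm] at this

end

theorem eight_div_three_mul_pow_le {X : ℝ} (hX : 1 ≤ X) {k : ℕ} (hk4 : 4 ≤ k) (hk : Even k) :
    (8 / (3 * X)) ^ k ≤ (2 * k ^ 2 / X) ^ ((k : ℝ) / 2) := by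
  obtain ⟨m, rfl⟩ := hk
  have hm : ((m + m : ℕ) : ℝ) / 2 = m := by push_cast; ring
  have hm2 : (2 : ℝ) ≤ m := by exact_mod_cast (by omega : 2 ≤ m)
  rw [hm, Real.rpow_natCast, ← two_mul, pow_mul]
  gcongr
  rw [div_pow, div_le_div_iff₀ (by positivity) (by positivity)]
  push_cast
  have hm4 : 4 ≤ (m : ℝ) ^ 2 := by nlinarith
  nlinarith [mul_le_mul_of_nonneg_right hm4 (sq_nonneg X)]

theorem bad_vertex_few_sampled_neighbors_general {V Ω : Type*} [Fintype V] [DecidableEq V]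
    [MeasurableSpace Ω]
    (G : SimpleGraph V) [DecidableRel G.Adj]
    (P : Measure Ω) [IsProbabilityMeasure P]
    (Vsamp : Ω → Finset V)
    (hmeas : ∀ w : V, MeasurableSet {ω | w ∈ Vsamp ω})
    (hprob : ∀ w : V, 1 ≤ G.degree w →
      (P {ω | w ∈ Vsamp ω}).toReal = (G.degree w : ℝ) ^ (-(1 : ℝ) / 2))
    (k : ℕ) (hk4 : 4 ≤ k) (hkeven : Even k)
    (hindep : KWiseIndepFun k (fun (w : V) (ω : Ω) => if w ∈ Vsamp ω then (1 : ℝ) else 0) P)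
    (d : ℝ) (hd1 : 1 ≤ d) (hd4 : (4 : ℝ) ≤ d ^ ((1 : ℝ) / 40))
    (u : V) (hdegr : (G.degree u : ℝ) < 2 * d)
    (hbad : ∑ w ∈ G.neighborFinset u, (G.degree w : ℝ) ^ (-(1 : ℝ) / 2)
      < (G.degree u : ℝ) ^ ((1 : ℝ) / 40))
    (hk : (k : ℝ) ≤ d ^ ((1 : ℝ) / 40)) :
    (P {ω | d ^ ((1 : ℝ) / 20)
        < (((G.neighborFinset u).filter (fun w => w ∈ Vsamp ω)).card : ℝ)}).toReal
      ≤ 8 * (2 * (k : ℝ) ^ 2 / d ^ ((1 : ℝ) / 40)) ^ ((k : ℝ) / 2) := by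
  have hd0 : 0 < d := by linarith
  set X := d ^ ((1 : ℝ) / 40) with hX
  have hX2 : d ^ ((1 : ℝ) / 20) = X ^ 2 := by
    rw [hX, ← Real.rpow_natCast, ← Real.rpow_mul hd0.le]; norm_num
  set n := ⌊X ^ 2⌋₊ + 1
  have hbad_sub : {ω | X ^ 2 < (#((G.neighborFinset u).filter (· ∈ Vsamp ω)) : ℝ)}
      ⊆ {ω | n ≤ #((G.neighborFinset u).filter (· ∈ Vsamp ω))} :=
    fun ω hω => (Nat.floor_lt (by positivity)).2 hω
  have hsum : ∑ w ∈ G.neighborFinset u, P.real {ω | w ∈ Vsamp ω} ≤ 2 * X := by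
    have hdeg : ∀ w ∈ G.neighborFinset u, 1 ≤ G.degree w := fun w hw =>
      (G.degree_pos_iff_exists_adj w).2 ⟨u, ((G.mem_neighborFinset u w).1 hw).symm⟩
    calc _ = ∑ w ∈ G.neighborFinset u, (G.degree w : ℝ) ^ (-(1 : ℝ) / 2) :=
          sum_congr rfl fun w hw => hprob w (hdeg w hw)
      _ ≤ (2 * d) ^ ((1 : ℝ) / 40) := hbad.le.trans (by gcongr)
      _ = 2 ^ ((1 : ℝ) / 40) * X := Real.mul_rpow zero_le_two hd0.le
      _ ≤ 2 * X := by
        gcongr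
        exact Real.rpow_le_self_of_one_le one_le_two (by norm_num)
  have hM : 3 / 4 * X ^ 2 ≤ ((n + 1 - k : ℕ) : ℝ) := by
    have hn : X ^ 2 < n := by push_cast [n]; exact Nat.lt_floor_add_one _
    have hkn : (k : ℝ) ≤ n + 1 := by nlinarith
    rw [Nat.cast_sub (by exact_mod_cast hkn)]
    push_cast
    nlinarith
  have htail := hindep.measureReal_mul_pow_le_sum_pow hmeas (G.neighborFinset u) n
  rw [hX2]
  calc P.real _ ≤ P.real {ω | n ≤ #((G.neighborFinset u).filter (· ∈ Vsamp ω))} :=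
        measureReal_mono hbad_sub
    _ ≤ (2 * X) ^ k / (3 / 4 * X ^ 2) ^ k := by
        rw [le_div_iff₀ (by positivity)]
        calc _ * (3 / 4 * X ^ 2) ^ k ≤ _ * ((n + 1 - k : ℕ) : ℝ) ^ k := by gcongr
          _ ≤ _ := htail
          _ ≤ (2 * X) ^ k := by gcongr
    _ = (8 / (3 * X)) ^ k := by rw [← div_pow]; congr 1; field_simp; ring
    _ ≤ (2 * k ^ 2 / X) ^ ((k : ℝ) / 2) := eight_div_three_mul_pow_le (by linarith) hk4 hkeven
    _ ≤ 8 * (2 * k ^ 2 / X) ^ ((k : ℝ) / 2) :=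
        le_mul_of_one_le_left (by positivity) (by norm_num)

/-- Let `d ≥ 1` be a real number with `d^ε ≥ 4` (where `ε = 1/40`), let `u` be a bad vertex
(that is, `∑_{w ∈ N(u)} deg(w)^{-1/2} < deg(u)^ε`) with `deg(u) ∈ [d, 2d)`, and let `k` be an
even integer with `4 ≤ k ≤ d^ε`. Each vertex `w` with `deg(w) ≥ 1` is sampled with probability
`deg(w)^{-1/2}`, with `k`-wise independent sampling indicators. Then the probability that `u`
has more than `d^{2ε}` sampled neighbors is at most `8·(2k²/d^ε)^(k/2)`. -/
theorem bad_vertex_few_sampled_neighbors {V Ω : Type*} [Fintype V] [DecidableEq V]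
    [MeasurableSpace Ω]
    (G : SimpleGraph V) [DecidableRel G.Adj]
    (P : Measure Ω) [IsProbabilityMeasure P]
    (Vsamp : Ω → Finset V)
    (hmeas : ∀ w : V, MeasurableSet {ω | w ∈ Vsamp ω})
    (hprob : ∀ w : V, 1 ≤ G.degree w →
      (P {ω | w ∈ Vsamp ω}).toReal = (G.degree w : ℝ) ^ (-(1 : ℝ) / 2))
    (k : ℕ) (hk4 : 4 ≤ k) (hkeven : Even k)
    (hindep : KWiseIndepFun k (fun (w : V) (ω : Ω) => if w ∈ Vsamp ω then (1 : ℝ) else 0) P)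
    (d : ℝ) (hd1 : 1 ≤ d) (hd4 : (4 : ℝ) ≤ d ^ ((1 : ℝ) / 40))
    (u : V) (hdegl : d ≤ (G.degree u : ℝ)) (hdegr : (G.degree u : ℝ) < 2 * d)
    (hbad : ∑ w ∈ G.neighborFinset u, (G.degree w : ℝ) ^ (-(1 : ℝ) / 2)
      < (G.degree u : ℝ) ^ ((1 : ℝ) / 40))
    (hk : (k : ℝ) ≤ d ^ ((1 : ℝ) / 40)) :
    (P {ω | d ^ ((1 : ℝ) / 20)
        < (((G.neighborFinset u).filter (fun w => w ∈ Vsamp ω)).card : ℝ)}).toReal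
      ≤ 8 * (2 * (k : ℝ) ^ 2 / d ^ ((1 : ℝ) / 40)) ^ ((k : ℝ) / 2) :=
  bad_vertex_few_sampled_neighbors_general G P Vsamp hmeas hprob k hk4 hkeven hindep d hd1 hd4 u
    hdegr hbad hk
end

section
/- Suppose the indicator random variables (1[v ∈ V_samp])_{v ∈ V} are pairwise independent with Pr[v ∈ V_samp] = deg(v)^{-1/2} for every vertex v with deg(v) ≥ 1. Then the expected number of edges of G whose both endpoints are sampled (i.e., the expected number of edges of the induced subgraph G[V_samp]) is at most n, the number of vertices of G. -/
open MeasureTheory ProbabilityTheory Finset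

/-!
Linearity of expectation and pairwise independence turn the expected number of sampled edges
into `∑_{uv ∈ E} (deg u)^{-1/2} (deg v)^{-1/2}`. By AM-GM each summand is at most
`(2 deg u)⁻¹ + (2 deg v)⁻¹`, and summing these weights over the edges charges every vertex `v`
exactly `deg v · (2 deg v)⁻¹ ≤ 1/2`.
-/

namespace SimpleGraph

theorem sum_edgeFinset_sum_toFinset {V M : Type*} [Fintype V] [DecidableEq V]
    [AddCommMonoid M] (G : SimpleGraph V) [DecidableRel G.Adj] (f : V → M) :
    ∑ e ∈ G.edgeFinset, ∑ x ∈ e.toFinset, f x = ∑ v, G.degree v • f v := by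
  rw [sum_comm' (t' := univ) (s' := fun v => G.incidenceFinset v)]
  · simp [card_incidenceFinset_eq_degree]
  · intro e v
    simp [incidenceFinset_eq_filter, Sym2.mem_toFinset]

end SimpleGraph

theorem ite_one_zero_eq_indicator {α M : Type*} [One M] [Zero M] (p : α → Prop)
    [DecidablePred p] : (fun a => if p a then (1 : M) else 0) = {a | p a}.indicator 1 := by
  ext a
  simp [Set.indicator_apply]

section Expectation

variable {Ω : Type*} [MeasurableSpace Ω] {P : Measure Ω}

theorem integral_ite_one_zero [IsFiniteMeasure P] {p : Ω → Prop} [DecidablePred p]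
    (hp : MeasurableSet {ω | p ω}) :
    ∫ ω, (if p ω then (1 : ℝ) else 0) ∂P = P.real {ω | p ω} := by
  rw [ite_one_zero_eq_indicator, integral_indicator_one hp]

theorem integrable_ite_one_zero [IsFiniteMeasure P] {p : Ω → Prop} [DecidablePred p]
    (hp : MeasurableSet {ω | p ω}) : Integrable (fun ω => if p ω then (1 : ℝ) else 0) P := by
  rw [ite_one_zero_eq_indicator]
  exact (integrable_indicator_iff hp).2 (integrableOn_const (measure_ne_top P _))

theorem integral_card_filter [IsFiniteMeasure P] {ι : Type*} (s : Finset ι)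
    (Q : ι → Ω → Prop) [∀ i ω, Decidable (Q i ω)]
    (hQ : ∀ i ∈ s, MeasurableSet {ω | Q i ω}) :
    ∫ ω, (#{i ∈ s | Q i ω} : ℝ) ∂P = ∑ i ∈ s, P.real {ω | Q i ω} := by
  simp only [card_filter, Nat.cast_sum, Nat.cast_ite, Nat.cast_one, Nat.cast_zero]
  rw [integral_finsetSum]
  · exact sum_congr rfl fun i hi => integral_ite_one_zero (hQ i hi)
  · exact fun i hi => integrable_ite_one_zero (hQ i hi)

theorem measureReal_and_eq_mul_of_indepFun [IsFiniteMeasure P] {p q : Ω → Prop}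
    [DecidablePred p] [DecidablePred q]
    (hp : MeasurableSet {ω | p ω}) (hq : MeasurableSet {ω | q ω})
    (hpq : IndepFun (fun ω => if p ω then (1 : ℝ) else 0)
      (fun ω => if q ω then (1 : ℝ) else 0) P) :
    P.real {ω | p ω ∧ q ω} = P.real {ω | p ω} * P.real {ω | q ω} := by
  have hprod : (fun ω => if p ω ∧ q ω then (1 : ℝ) else 0)
      = (fun ω => if p ω then (1 : ℝ) else 0) * (fun ω => if q ω then (1 : ℝ) else 0) := by
    ext ω
    by_cases p ω <;> by_cases q ω <;> simp [*]
  rw [← integral_ite_one_zero (p := fun ω => p ω ∧ q ω) (hp.inter hq),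
    ← integral_ite_one_zero hp, ← integral_ite_one_zero hq, hprod]
  exact hpq.integral_mul_eq_mul_integral
    (integrable_ite_one_zero hp).aestronglyMeasurable
    (integrable_ite_one_zero hq).aestronglyMeasurable

end Expectation

theorem Real.rpow_neg_half_mul_le {a b : ℝ} (ha : 0 < a) (hb : 0 < b) :
    a ^ (-(1 : ℝ) / 2) * b ^ (-(1 : ℝ) / 2) ≤ (2 * a)⁻¹ + (2 * b)⁻¹ := by
  have hsq : ∀ {c : ℝ}, 0 < c → (c ^ (-(1 : ℝ) / 2)) ^ 2 = c⁻¹ := fun hc => by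
    rw [← Real.rpow_natCast, ← Real.rpow_mul hc.le]
    norm_num [Real.rpow_neg_one]
  have hamgm := two_mul_le_add_sq (a ^ (-(1 : ℝ) / 2)) (b ^ (-(1 : ℝ) / 2))
  rw [hsq ha, hsq hb] at hamgm
  rw [mul_inv, mul_inv]
  linarith

theorem mul_inv_two_mul_le_half (x : ℝ) : x * (2 * x)⁻¹ ≤ 1 / 2 := by
  rcases eq_or_ne x 0 with rfl | hx
  · norm_num
  · field_simp
    norm_num

theorem expected_sampled_edges_le_general {V Ω : Type*} [Fintype V] [DecidableEq V] [MeasurableSpace Ω]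
    (G : SimpleGraph V) [DecidableRel G.Adj]
    (P : Measure Ω) [IsProbabilityMeasure P]
    (Vsamp : Ω → Finset V)
    (hmeas : ∀ v : V, MeasurableSet {ω | v ∈ Vsamp ω})
    (hprob : ∀ v : V, 1 ≤ G.degree v →
      (P {ω | v ∈ Vsamp ω}).toReal = (G.degree v : ℝ) ^ (-(1 : ℝ) / 2))
    (hpairwise : ∀ u v : V, u ≠ v →
      IndepFun (fun ω => if u ∈ Vsamp ω then (1 : ℝ) else 0)
        (fun ω => if v ∈ Vsamp ω then (1 : ℝ) else 0) P) :
    (∫ ω, ((G.edgeFinset.filter (fun e => ∀ x ∈ e, x ∈ Vsamp ω)).card : ℝ) ∂P)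
      ≤ (Fintype.card V : ℝ) := by
  have hedge : ∀ e ∈ G.edgeFinset, P.real {ω | ∀ x ∈ e, x ∈ Vsamp ω}
      ≤ ∑ x ∈ e.toFinset, (2 * (G.degree x : ℝ))⁻¹ := by
    intro e he
    induction e using Sym2.ind with
    | _ u v =>
      have huv : G.Adj u v := G.mem_edgeFinset.1 he
      have hdeg {x y : V} (h : G.Adj x y) : 1 ≤ G.degree x :=
        G.degree_pos_iff_exists_adj x |>.2 ⟨y, h⟩
      simp only [Sym2.ball]
      rw [measureReal_and_eq_mul_of_indepFun (hmeas u) (hmeas v) (hpairwise u v huv.ne),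
        measureReal_def, measureReal_def, hprob u (hdeg huv), hprob v (hdeg huv.symm),
        Sym2.toFinset_mk_eq, sum_pair huv.ne]
      exact Real.rpow_neg_half_mul_le (Nat.cast_pos.2 (hdeg huv))
        (Nat.cast_pos.2 (hdeg huv.symm))
  calc (∫ ω, ((G.edgeFinset.filter (fun e => ∀ x ∈ e, x ∈ Vsamp ω)).card : ℝ) ∂P)
      = ∑ e ∈ G.edgeFinset, P.real {ω | ∀ x ∈ e, x ∈ Vsamp ω} := by
        refine integral_card_filter _ _ fun e _ => ?_
        induction e using Sym2.ind with
        | _ u v => simp only [Sym2.ball]; exact (hmeas u).inter (hmeas v)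
    _ ≤ ∑ e ∈ G.edgeFinset, ∑ x ∈ e.toFinset, (2 * (G.degree x : ℝ))⁻¹ := sum_le_sum hedge
    _ = ∑ v, (G.degree v : ℝ) * (2 * (G.degree v : ℝ))⁻¹ := by
        simp [G.sum_edgeFinset_sum_toFinset]
    _ ≤ ∑ _v : V, (1 : ℝ) :=
        sum_le_sum fun v _ => (mul_inv_two_mul_le_half _).trans (by norm_num)
    _ = Fintype.card V := by simp

/-- Suppose each vertex `v` of a finite simple graph `G` with `deg(v) ≥ 1` is sampled with
probability `deg(v)^{-1/2}`, vertices of degree `0` are never sampled, and the sampling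
indicator random variables are pairwise independent. Then the expected number of edges of `G`
whose both endpoints are sampled (i.e., the expected number of edges of the induced subgraph
`G[V_samp]`) is at most `n`, the number of vertices of `G`. -/
theorem expected_sampled_edges_le {V Ω : Type*} [Fintype V] [DecidableEq V] [MeasurableSpace Ω]
    (G : SimpleGraph V) [DecidableRel G.Adj]
    (P : Measure Ω) [IsProbabilityMeasure P]
    (Vsamp : Ω → Finset V)
    (hmeas : ∀ v : V, MeasurableSet {ω | v ∈ Vsamp ω})
    (hprob : ∀ v : V, 1 ≤ G.degree v →
      (P {ω | v ∈ Vsamp ω}).toReal = (G.degree v : ℝ) ^ (-(1 : ℝ) / 2))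
    (hzero : ∀ v : V, G.degree v = 0 → ∀ ω : Ω, v ∉ Vsamp ω)
    (hpairwise : ∀ u v : V, u ≠ v →
      IndepFun (fun ω => if u ∈ Vsamp ω then (1 : ℝ) else 0)
        (fun ω => if v ∈ Vsamp ω then (1 : ℝ) else 0) P) :
    (∫ ω, ((G.edgeFinset.filter (fun e => ∀ x ∈ e, x ∈ Vsamp ω)).card : ℝ) ∂P)
      ≤ (Fintype.card V : ℝ) :=
  expected_sampled_edges_le_general G P Vsamp hmeas hprob hpairwise
end

section
/- Let v be a bad vertex of G with deg(v) = d ≥ 1. Then at least d/2 of the neighbors of v have degree at least d^{2(1−ε)}/4. -/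
/-!
Call a neighbour `u` of `v` light when `deg u < T := d ^ (2 (1 - ε)) / 4`, where `d = deg v`.
Each light neighbour contributes at least `T ^ (-1/2) = 2 / d ^ (1 - ε)` to
`∑_{u ∈ N(v)} deg(u) ^ (-1/2)`, which is `< d ^ ε` at a bad vertex; hence fewer than `d / 2`
neighbours are light.
-/

open Finset

lemma Real.rpow_two_mul_div_four_rpow_neg_half {d : ℝ} (hd : 0 ≤ d) (a : ℝ) :
    (d ^ (2 * a) / 4) ^ (-(1 : ℝ) / 2) = 2 / d ^ a := by
  have h4 : (4 : ℝ) ^ (-(1 : ℝ) / 2) = 2⁻¹ := by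
    rw [show (4 : ℝ) = 2 ^ (2 : ℝ) by norm_num, ← Real.rpow_mul (by norm_num)]
    norm_num
  rw [Real.div_rpow (by positivity) (by norm_num), h4, ← Real.rpow_mul hd,
    show 2 * a * (-(1 : ℝ) / 2) = -a by ring, Real.rpow_neg hd]
  field_simp

namespace SimpleGraph

variable {V : Type*} [Fintype V] (G : SimpleGraph V) [DecidableRel G.Adj]

lemma card_filter_degree_lt_mul_rpow_le_sum (v : V) {T r : ℝ} (hr : r ≤ 0) :
    #{u ∈ G.neighborFinset v | (G.degree u : ℝ) < T} * T ^ r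
      ≤ ∑ u ∈ G.neighborFinset v, (G.degree u : ℝ) ^ r := by
  calc #{u ∈ G.neighborFinset v | (G.degree u : ℝ) < T} * T ^ r
      = ∑ _u ∈ G.neighborFinset v with (G.degree _u : ℝ) < T, T ^ r := by
        rw [sum_const, nsmul_eq_mul]
    _ ≤ ∑ u ∈ G.neighborFinset v with (G.degree u : ℝ) < T, (G.degree u : ℝ) ^ r := by
        refine sum_le_sum fun u hu ↦ ?_
        rw [mem_filter, mem_neighborFinset] at hu
        have hpos : (0 : ℝ) < G.degree u := by
          exact_mod_cast G.degree_pos_iff_exists_adj u |>.mpr ⟨v, hu.1.symm⟩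
        exact Real.rpow_le_rpow_of_nonpos hpos hu.2.le hr
    _ ≤ ∑ u ∈ G.neighborFinset v, (G.degree u : ℝ) ^ r :=
        sum_le_sum_of_subset_of_nonneg (filter_subset _ _) fun _ _ _ ↦ by positivity

theorem half_degree_le_card_filter_of_sum_rpow_neg_half_lt {v : V} (hdeg : 0 < G.degree v)
    {ε : ℝ} (hbad : ∑ u ∈ G.neighborFinset v, (G.degree u : ℝ) ^ (-(1 : ℝ) / 2)
      < (G.degree v : ℝ) ^ ε) :
    (G.degree v : ℝ) / 2
      ≤ #{u ∈ G.neighborFinset v | (G.degree v : ℝ) ^ (2 * (1 - ε)) / 4 ≤ G.degree u} := by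
  have hd : (0 : ℝ) < G.degree v := by exact_mod_cast hdeg
  set d : ℝ := (G.degree v : ℝ)
  set T := d ^ (2 * (1 - ε)) / 4
  have hlight : (#{u ∈ G.neighborFinset v | (G.degree u : ℝ) < T} : ℝ) < d / 2 := by
    have h := (G.card_filter_degree_lt_mul_rpow_le_sum v (T := T) (by norm_num)).trans_lt hbad
    rw [Real.rpow_two_mul_div_four_rpow_neg_half hd.le, mul_div_assoc',
      div_lt_iff₀ (by positivity), ← Real.rpow_add hd, add_sub_cancel, Real.rpow_one] at h
    linarith
  have hsplit := card_filter_add_card_filter_not (s := G.neighborFinset v)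
    (p := fun u ↦ T ≤ (G.degree u : ℝ))
  simp only [not_le, card_neighborFinset_eq_degree] at hsplit
  have hcount : (#{u ∈ G.neighborFinset v | T ≤ (G.degree u : ℝ)} : ℝ)
      + #{u ∈ G.neighborFinset v | (G.degree u : ℝ) < T} = d := by
    rw [← Nat.cast_add, hsplit]
  linarith

end SimpleGraph

theorem bad_vertex_many_high_degree_neighbors_general {V : Type*} [Fintype V]
    (G : SimpleGraph V) [DecidableRel G.Adj]
    (v : V) (hdeg : 1 ≤ G.degree v)
    (hbad : ∑ u ∈ G.neighborFinset v, (G.degree u : ℝ) ^ (-(1 : ℝ) / 2)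
      < (G.degree v : ℝ) ^ ((1 : ℝ) / 40)) :
    (G.degree v : ℝ) / 2
      ≤ (((G.neighborFinset v).filter
          (fun u => (G.degree v : ℝ) ^ ((39 : ℝ) / 20) / 4 ≤ (G.degree u : ℝ))).card : ℝ) := by
  convert G.half_degree_le_card_filter_of_sum_rpow_neg_half_lt hdeg hbad using 6
  norm_num

/-- Let `v` be a bad vertex of `G` with `deg(v) = d ≥ 1`, i.e.
`∑_{u ∈ N(v)} deg(u)^{-1/2} < deg(v)^ε` with `ε = 1/40`. Then at least `d/2` of the neighbors
of `v` have degree at least `d^{2(1−ε)}/4 = d^{1.95}/4`. -/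
theorem bad_vertex_many_high_degree_neighbors {V : Type*} [Fintype V] [DecidableEq V]
    (G : SimpleGraph V) [DecidableRel G.Adj]
    (v : V) (hdeg : 1 ≤ G.degree v)
    (hbad : ∑ u ∈ G.neighborFinset v, (G.degree u : ℝ) ^ (-(1 : ℝ) / 2)
      < (G.degree v : ℝ) ^ ((1 : ℝ) / 40)) :
    (G.degree v : ℝ) / 2
      ≤ (((G.neighborFinset v).filter
          (fun u => (G.degree v : ℝ) ^ ((39 : ℝ) / 20) / 4 ≤ (G.degree u : ℝ))).card : ℝ) :=
  bad_vertex_many_high_degree_neighbors_general G v hdeg hbad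
end

section
/- Let d ≥ 5 be a real number. Let B_d be the set of bad vertices of G with degree in [d, 2d), let B_d^* be the set of vertices u ∈ B_d such that no neighbor w of u satisfies |N(w) ∩ B_d| ≥ 6·d^{0.6}, and let V_{≥d} be the set of vertices of G of degree at least d. Then |B_d^*| ≤ 12·|V_{≥d}|/d^{0.4}. -/
/-!
A vertex `u ∈ B_d^*` is bad, so few of its neighbours can have degree below `d`: each such
neighbour contributes more than `d^{-1/2}` to `∑ deg(w)^{-1/2} < (2d)^{1/40}`, which caps their
number by `(2d)^{1/40} √d ≤ d/2`. Hence `u` has at least `d/2` neighbours in `V_{≥d}`. Conversely a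
vertex adjacent to some `u ∈ B_d^*` has fewer than `6 d^{3/5}` neighbours in `B_d ⊇ B_d^*`. Double
counting the edges between `B_d^*` and `V_{≥d}` gives `|B_d^*| d/2 ≤ 6 d^{3/5} |V_{≥d}|`.
-/

open Finset Real

lemma two_mul_rpow_one_div_forty_le_sqrt_div_two {d : ℝ} (hd : 5 ≤ d) :
    (2 * d) ^ ((1 : ℝ) / 40) ≤ √d / 2 := by
  have hpow : 2 * d ≤ (√d / 2) ^ 40 := by
    have h19 : (2 : ℝ) ^ 41 ≤ d ^ 19 :=
      le_trans (by norm_num) (pow_le_pow_left₀ (by norm_num) hd 19)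
    rw [div_pow, show (√d) ^ 40 = d ^ 20 by rw [show 40 = 2 * 20 by rfl, pow_mul,
      sq_sqrt (by linarith)], le_div_iff₀ (by positivity)]
    nlinarith [pow_succ d 19]
  calc (2 * d) ^ ((1 : ℝ) / 40) ≤ ((√d / 2) ^ 40) ^ ((1 : ℝ) / 40) :=
        rpow_le_rpow (by linarith) hpow (by norm_num)
    _ = √d / 2 := by
        rw [one_div]
        exact_mod_cast pow_rpow_inv_natCast (by positivity) (by norm_num : 40 ≠ 0)

namespace SimpleGraph

variable {V : Type*} (G : SimpleGraph V) [G.LocallyFinite]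

lemma card_filter_degree_lt_mul_rpow_le (u : V) {d r : ℝ} (hr : r ≤ 0) :
    #{w ∈ G.neighborFinset u | (G.degree w : ℝ) < d} * d ^ r
      ≤ ∑ w ∈ G.neighborFinset u, (G.degree w : ℝ) ^ r := by
  set L := {w ∈ G.neighborFinset u | (G.degree w : ℝ) < d}
  calc #L * d ^ r = ∑ _w ∈ L, d ^ r := by rw [sum_const, nsmul_eq_mul]
    _ ≤ ∑ w ∈ L, (G.degree w : ℝ) ^ r := by
          refine sum_le_sum fun w hw => ?_
          obtain ⟨hadj, hlt⟩ := mem_filter.1 hw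
          have hpos : 0 < G.degree w :=
            G.degree_pos_iff_exists_adj w |>.2 ⟨u, ((G.mem_neighborFinset u w).1 hadj).symm⟩
          exact rpow_le_rpow_of_nonpos (by exact_mod_cast hpos) hlt.le hr
    _ ≤ ∑ w ∈ G.neighborFinset u, (G.degree w : ℝ) ^ r :=
          sum_le_sum_of_subset_of_nonneg (filter_subset _ _)
            fun _ _ _ => rpow_nonneg (Nat.cast_nonneg _) _

lemma div_two_le_card_filter_le_degree {u : V} {d : ℝ} (hd : 5 ≤ d)
    (hdu : d ≤ G.degree u) (hud : (G.degree u : ℝ) < 2 * d)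
    (hbad : ∑ w ∈ G.neighborFinset u, (G.degree w : ℝ) ^ (-(1 : ℝ) / 2)
      < (G.degree u : ℝ) ^ ((1 : ℝ) / 40)) :
    d / 2 ≤ #{w ∈ G.neighborFinset u | d ≤ (G.degree w : ℝ)} := by
  have hd0 : 0 < d := by linarith
  have hsqrt : 0 < √d := sqrt_pos.2 hd0
  have hlow : (#{w ∈ G.neighborFinset u | (G.degree w : ℝ) < d} : ℝ) ≤ d / 2 := by
    have hlt := (G.card_filter_degree_lt_mul_rpow_le u (d := d) (by norm_num)).trans_lt <|
      hbad.trans_le (rpow_le_rpow (by positivity) hud.le (by norm_num))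
    rw [neg_div, rpow_neg hd0.le, ← sqrt_eq_rpow, ← div_eq_mul_inv,
      div_lt_iff₀ hsqrt] at hlt
    calc _ ≤ (2 * d) ^ ((1 : ℝ) / 40) * √d := hlt.le
      _ ≤ √d / 2 * √d :=
          mul_le_mul_of_nonneg_right (two_mul_rpow_one_div_forty_le_sqrt_div_two hd) hsqrt.le
      _ = d / 2 := by rw [div_mul_eq_mul_div, mul_self_sqrt hd0.le]
  have hsplit := card_filter_add_card_filter_not (s := G.neighborFinset u)
    (fun w => d ≤ (G.degree w : ℝ))
  simp only [not_le, card_neighborFinset_eq_degree] at hsplit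
  have hdeg : (#{w ∈ G.neighborFinset u | d ≤ (G.degree w : ℝ)} : ℝ)
      + #{w ∈ G.neighborFinset u | (G.degree w : ℝ) < d} = G.degree u := by
    exact_mod_cast hsplit
  linarith

end SimpleGraph

/-- Let `d ≥ 5` be a real number. Let `B_d` be the set of bad vertices of `G` with degree in
`[d, 2d)` (a vertex `u` is bad if `∑_{w ∈ N(u)} deg(w)^{-1/2} < deg(u)^ε` with `ε = 1/40`),
let `B_d^*` be the set of vertices `u ∈ B_d` such that no neighbor `w` of `u` satisfies
`|N(w) ∩ B_d| ≥ 6·d^{0.6}`, and let `V_{≥d}` be the set of vertices of `G` of degree at least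
`d`. Then `|B_d^*| ≤ 12·|V_{≥d}|/d^{0.4}`. -/
theorem counting_bad_nodes {V : Type*} [Fintype V] [DecidableEq V]
    (G : SimpleGraph V) [DecidableRel G.Adj]
    (d : ℝ) (hd : 5 ≤ d)
    (Bd Bdstar Vged : Finset V)
    (hBd : ∀ u : V, u ∈ Bd ↔
      (d ≤ (G.degree u : ℝ) ∧ (G.degree u : ℝ) < 2 * d ∧
        ∑ w ∈ G.neighborFinset u, (G.degree w : ℝ) ^ (-(1 : ℝ) / 2)
          < (G.degree u : ℝ) ^ ((1 : ℝ) / 40)))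
    (hBdstar : ∀ u : V, u ∈ Bdstar ↔
      (u ∈ Bd ∧ ∀ w ∈ G.neighborFinset u,
        ¬ (6 * d ^ ((3 : ℝ) / 5) ≤ ((G.neighborFinset w ∩ Bd).card : ℝ))))
    (hVged : ∀ u : V, u ∈ Vged ↔ d ≤ (G.degree u : ℝ)) :
    (Bdstar.card : ℝ) ≤ 12 * (Vged.card : ℝ) / d ^ ((2 : ℝ) / 5) := by
  have hd0 : 0 < d := by linarith
  have hhigh : ∀ u ∈ Bdstar, d / 2 ≤ #(Vged.bipartiteAbove G.Adj u) := by
    intro u hu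
    obtain ⟨hdu, hud, hbad⟩ := (hBd u).1 ((hBdstar u).1 hu).1
    have hset : Vged.bipartiteAbove G.Adj u = {w ∈ G.neighborFinset u | d ≤ (G.degree w : ℝ)} := by
      ext w; simp [bipartiteAbove, hVged, and_comm]
    rw [hset]
    exact G.div_two_le_card_filter_le_degree hd hdu hud hbad
  have hfew : ∀ w ∈ Vged, #(Bdstar.bipartiteBelow G.Adj w) ≤ 6 * d ^ ((3 : ℝ) / 5) := by
    intro w _
    obtain ⟨u, hu⟩ | hempty := (Bdstar.bipartiteBelow G.Adj w).eq_empty_or_nonempty.symm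
    · obtain ⟨huB, huw⟩ := mem_filter.1 hu
      have hsub : Bdstar.bipartiteBelow G.Adj w ⊆ G.neighborFinset w ∩ Bd := fun x hx => by
        obtain ⟨hxB, hxw⟩ := mem_filter.1 hx
        exact mem_inter.2 ⟨(G.mem_neighborFinset w x).2 hxw.symm, ((hBdstar x).1 hxB).1⟩
      refine le_trans (Nat.cast_le.2 (card_le_card hsub)) (not_le.1 ?_).le
      exact ((hBdstar u).1 huB).2 w ((G.mem_neighborFinset u w).2 huw)
    · rw [hempty, card_empty, Nat.cast_zero]; positivity
  have hcount := card_nsmul_le_card_nsmul G.Adj hhigh hfew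
  rw [nsmul_eq_mul, nsmul_eq_mul] at hcount
  rw [le_div_iff₀ (by positivity)]
  refine le_of_mul_le_mul_right ?_ (rpow_pos_of_pos hd0 ((3 : ℝ) / 5))
  rw [mul_assoc, ← rpow_add hd0, show (2 : ℝ) / 5 + 3 / 5 = 1 by norm_num, rpow_one]
  linarith
end

section
/- Let Δ ≥ 2 and f ≥ 2 be real numbers, let L = log₂ Δ and g = 2·log₂(f·L), and assume L ≥ g. Let k = ⌊log₂(L/g)⌋. Then (f·L)² ≤ Δ^{1/2^k} < (f·L)⁴. -/
/-- Let `Δ ≥ 2` and `f ≥ 2` be real numbers, let `L = log₂ Δ` and `g = 2·log₂(f·L)`, and assume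
`L ≥ g`. Let `k = ⌊log₂(L/g)⌋`. Then `(f·L)² ≤ Δ^{1/2^k} < (f·L)⁴`. -/
theorem sparsification_final_degree (Δ f L g : ℝ) (hΔ : 2 ≤ Δ) (hf : 2 ≤ f)
    (hL : L = Real.logb 2 Δ) (hg : g = 2 * Real.logb 2 (f * L)) (hgL : g ≤ L)
    (k : ℤ) (hk : k = ⌊Real.logb 2 (L / g)⌋) :
    (f * L) ^ 2 ≤ Δ ^ (1 / (2 : ℝ) ^ k) ∧ Δ ^ (1 / (2 : ℝ) ^ k) < (f * L) ^ 4 := by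
  have h2 : (1:ℝ) < 2 := one_lt_two
  have hΔ0 : (0:ℝ) < Δ := by linarith
  have hL1 : (1:ℝ) ≤ L := by
    rw [hL]
    calc (1:ℝ) = Real.logb 2 2 := by simp
      _ ≤ Real.logb 2 Δ := Real.logb_le_logb_of_le (by norm_num) (by norm_num) hΔ
  have hfL2 : (2:ℝ) ≤ f * L := by nlinarith
  have hfL0 : (0:ℝ) < f * L := by linarith
  have hg2 : (2:ℝ) ≤ g := by
    rw [hg]
    have h1 : (1:ℝ) ≤ Real.logb 2 (f * L) := by
      calc (1:ℝ) = Real.logb 2 2 := by simp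
        _ ≤ Real.logb 2 (f * L) := Real.logb_le_logb_of_le (by norm_num) (by norm_num) hfL2
    linarith
  have hg0 : (0:ℝ) < g := by linarith
  set K : ℝ := (2:ℝ) ^ k with hKdef
  have hK0 : (0:ℝ) < K := zpow_pos (by norm_num) k
  have hKr : K = (2:ℝ) ^ (k : ℝ) := (Real.rpow_intCast 2 k).symm
  have hLg0 : 0 < L / g := div_pos (by linarith) hg0
  have hb1 : (k:ℝ) ≤ Real.logb 2 (L/g) := by rw [hk]; exact Int.floor_le _
  have hb2 : Real.logb 2 (L/g) < (k:ℝ) + 1 := by rw [hk]; exact Int.lt_floor_add_one _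
  have hK_le : K ≤ L / g := by
    rw [hKr]
    calc (2:ℝ) ^ (k:ℝ) ≤ 2 ^ Real.logb 2 (L/g) :=
          (Real.rpow_le_rpow_left_iff h2).mpr hb1
      _ = L / g := Real.rpow_logb (by norm_num) (by norm_num) hLg0
  have hK_lt : L / g < 2 * K := by
    have h : L / g < (2:ℝ) ^ ((k:ℝ) + 1) := by
      calc L / g = 2 ^ Real.logb 2 (L/g) :=
            (Real.rpow_logb (by norm_num) (by norm_num) hLg0).symm
        _ < 2 ^ ((k:ℝ) + 1) := (Real.rpow_lt_rpow_left_iff h2).mpr hb2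
    rw [Real.rpow_add (by norm_num), Real.rpow_one, ← hKr] at h
    linarith
  have h1 : g ≤ L / K := by
    rw [le_div_iff₀ hK0]
    have := (le_div_iff₀ hg0).mp hK_le
    nlinarith
  have h2' : L / K < 2 * g := by
    rw [div_lt_iff₀ hK0]
    have := (div_lt_iff₀ hg0).mp hK_lt
    nlinarith
  have hΔ2 : (2:ℝ) ^ L = Δ := by
    rw [hL]; exact Real.rpow_logb (by norm_num) (by norm_num) hΔ0
  have hΔeq : Δ ^ (1/K) = (2:ℝ) ^ (L / K) := by
    rw [← hΔ2, ← Real.rpow_mul (by norm_num : (0:ℝ) ≤ 2), mul_one_div]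
  have hfLg : (2:ℝ) ^ g = (f*L)^2 := by
    rw [hg, mul_comm, Real.rpow_mul (by norm_num : (0:ℝ) ≤ 2),
        Real.rpow_logb (by norm_num) (by norm_num) hfL0]
    exact Real.rpow_two _
  have hfLg4 : (2:ℝ) ^ (2*g) = (f*L)^4 := by
    rw [mul_comm, Real.rpow_mul (by norm_num : (0:ℝ) ≤ 2), hfLg]
    rw [Real.rpow_two]; ring
  constructor
  · calc (f*L)^2 = (2:ℝ)^g := hfLg.symm
      _ ≤ (2:ℝ)^(L/K) := (Real.rpow_le_rpow_left_iff h2).mpr h1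
      _ = Δ ^ (1/K) := hΔeq.symm
  · calc Δ ^ (1/K) = (2:ℝ)^(L/K) := hΔeq
      _ < (2:ℝ)^(2*g) := (Real.rpow_lt_rpow_left_iff h2).mpr h2'
      _ = (f*L)^4 := hfLg4
end

section
/- Let G be a finite simple graph with maximum degree at most Δ, let n ≥ 2 and f ≥ 1 be reals, and set p = f·ln(n)/Δ, assuming p ≤ 1. Suppose each vertex of G is sampled independently with probability p. Then for every vertex v, the probability that v has at least 6·f·ln(n) sampled neighbors is at most n^{−f}. -/
/-!
A vertex with at least `k` sampled neighbours has some `k`-set of sampled neighbours, so by the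
union bound and independence the probability is at most `C(d, k) p^k ≤ (d p)^k / k!`, where
`d ≤ Δ` is the degree, so `d p ≤ f ln n =: x`. Taking `k = ⌈6x⌉`, the estimate
`x^k / k! ≤ e^{6x} / 6^k ≤ e^{6x (1 - ln 6)} ≤ e^{-x}` (as `ln 6 ≥ 7/6`) gives `n^{-f}`.
-/

open MeasureTheory ProbabilityTheory Finset Real
open scoped Nat

theorem measure_le_card_filter_le_choose_mul_pow {ι Ω : Type*} [MeasurableSpace Ω]
    {μ : Measure Ω} (E : ι → Ω → Prop) [∀ i, DecidablePred (E i)]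
    (hindep : iIndepSet (fun i => {ω | E i ω}) μ) {q : ENNReal}
    (hq : ∀ i, μ {ω | E i ω} = q) (s : Finset ι) (k : ℕ) :
    μ {ω | k ≤ #(s.filter (E · ω))} ≤ (#s).choose k * q ^ k := by
  have hcover : {ω | k ≤ #(s.filter (E · ω))} ⊆ ⋃ t ∈ s.powersetCard k, ⋂ i ∈ t, {ω | E i ω} := by
    intro ω hω
    obtain ⟨t, hts, htk⟩ := exists_subset_card_eq (Set.mem_ofPred_eq ▸ hω)
    simp only [Set.mem_iUnion, Set.mem_iInter, Set.mem_ofPred_eq]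
    exact ⟨t, mem_powersetCard.2 ⟨hts.trans (filter_subset _ _), htk⟩,
      fun i hi => (mem_filter.1 (hts hi)).2⟩
  calc μ {ω | k ≤ #(s.filter (E · ω))}
      ≤ μ (⋃ t ∈ s.powersetCard k, ⋂ i ∈ t, {ω | E i ω}) := measure_mono hcover
    _ ≤ ∑ t ∈ s.powersetCard k, μ (⋂ i ∈ t, {ω | E i ω}) := measure_biUnion_finset_le _ _
    _ = ∑ _t ∈ s.powersetCard k, q ^ k := by
      refine sum_congr rfl fun t ht => ?_
      rw [hindep.meas_biInter, prod_congr rfl fun i _ => hq i, prod_const,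
        (mem_powersetCard.1 ht).2]
    _ = (#s).choose k * q ^ k := by rw [sum_const, card_powersetCard, nsmul_eq_mul]

theorem seven_div_six_le_log_six : (7 / 6 : ℝ) ≤ log 6 :=
  calc (7 / 6 : ℝ) ≤ 2 * log 2 := by linarith [log_two_gt_d9]
    _ = log 4 := by rw [← log_rpow two_pos]; norm_num
    _ ≤ log 6 := log_le_log (by norm_num) (by norm_num)

theorem pow_div_factorial_le_exp_neg {x : ℝ} {k : ℕ} (hx : 0 ≤ x) (hk : 6 * x ≤ k) :
    x ^ k / k ! ≤ exp (-x) :=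
  calc x ^ k / k ! = (6 * x) ^ k / k ! / 6 ^ k := by rw [mul_pow]; field_simp
    _ ≤ exp (6 * x) / 6 ^ k := by gcongr; exact pow_div_factorial_le_exp _ (by positivity) k
    _ = exp (6 * x - k * log 6) := by rw [exp_sub, exp_nat_mul, exp_log (by norm_num)]
    _ ≤ exp (-x) := by
      have := seven_div_six_le_log_six
      gcongr
      nlinarith

theorem choose_mul_pow_le_exp_neg {d k : ℕ} {p x : ℝ} (hp : 0 ≤ p) (hdp : d * p ≤ x)
    (hk : 6 * x ≤ k) : d.choose k * p ^ k ≤ exp (-x) :=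
  calc d.choose k * p ^ k ≤ (d : ℝ) ^ k / k ! * p ^ k := by
        gcongr; exact Nat.choose_le_pow_div k d
    _ = (d * p) ^ k / k ! := by ring
    _ ≤ x ^ k / k ! := by gcongr
    _ ≤ exp (-x) := pow_div_factorial_le_exp_neg ((by positivity : (0 : ℝ) ≤ d * p).trans hdp) hk

theorem few_sampled_neighbors_general {V Ω : Type*} [Fintype V] [DecidableEq V] [MeasurableSpace Ω]
    (G : SimpleGraph V) [DecidableRel G.Adj]
    (P : Measure Ω) [IsProbabilityMeasure P]
    (Δ f n p : ℝ) (hmaxdeg : ∀ v : V, (G.degree v : ℝ) ≤ Δ)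
    (hn : 2 ≤ n) (hf : 1 ≤ f) (hp : p = f * Real.log n / Δ)
    (Vsamp : Ω → Finset V)
    (hprob : ∀ v : V, P {ω | v ∈ Vsamp ω} = ENNReal.ofReal p)
    (hindep : iIndepSet (fun v : V => {ω | v ∈ Vsamp ω}) P)
    (v : V) :
    (P {ω | 6 * f * Real.log n
        ≤ (((G.neighborFinset v).filter (fun u => u ∈ Vsamp ω)).card : ℝ)}).toReal
      ≤ n ^ (-f) := by
  have hdΔ : (#(G.neighborFinset v) : ℝ) ≤ Δ := G.card_neighborFinset_eq_degree v ▸ hmaxdeg v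
  set x := f * log n
  set d := #(G.neighborFinset v)
  have hx : 0 ≤ x := mul_nonneg (by linarith) (log_nonneg (by linarith))
  have hΔ : 0 ≤ Δ := (Nat.cast_nonneg _).trans hdΔ
  have hp0 : 0 ≤ p := hp ▸ div_nonneg hx hΔ
  have hdp : d * p ≤ x :=
    calc d * p = d / Δ * x := by rw [hp]; ring
      _ ≤ 1 * x := by gcongr; exact div_le_one_of_le₀ hdΔ hΔ
      _ = x := one_mul x
  have hevent : {ω | 6 * f * log n ≤ (#((G.neighborFinset v).filter (· ∈ Vsamp ω)) : ℝ)}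
      = {ω | ⌈6 * x⌉₊ ≤ #((G.neighborFinset v).filter (· ∈ Vsamp ω))} := by
    ext ω; simp only [Set.mem_ofPred_eq, Nat.ceil_le, x, mul_assoc]
  have hmeasure := measure_le_card_filter_le_choose_mul_pow (fun u ω => u ∈ Vsamp ω) hindep
    hprob (G.neighborFinset v) ⌈6 * x⌉₊
  rw [← ENNReal.ofReal_natCast, ← ENNReal.ofReal_pow hp0,
    ← ENNReal.ofReal_mul (Nat.cast_nonneg _)] at hmeasure
  rw [hevent]
  calc _ ≤ d.choose ⌈6 * x⌉₊ * p ^ ⌈6 * x⌉₊ :=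
        ENNReal.toReal_le_of_le_ofReal (by positivity) hmeasure
    _ ≤ exp (-x) := choose_mul_pow_le_exp_neg hp0 hdp (Nat.le_ceil _)
    _ = n ^ (-f) := by rw [rpow_def_of_pos (by linarith), mul_neg, mul_comm]

/-- Let `G` be a finite simple graph with maximum degree at most `Δ`, let `n ≥ 2` and `f ≥ 1`
be reals, and set `p = f·ln(n)/Δ`, assuming `p ≤ 1`. Suppose each vertex of `G` is sampled
independently with probability `p`. Then for every vertex `v`, the probability that `v` has at
least `6·f·ln(n)` sampled neighbors is at most `n^{−f}`. -/
theorem few_sampled_neighbors {V Ω : Type*} [Fintype V] [DecidableEq V] [MeasurableSpace Ω]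
    (G : SimpleGraph V) [DecidableRel G.Adj]
    (P : Measure Ω) [IsProbabilityMeasure P]
    (Δ f n p : ℝ) (hΔ : 0 < Δ) (hmaxdeg : ∀ v : V, (G.degree v : ℝ) ≤ Δ)
    (hn : 2 ≤ n) (hf : 1 ≤ f) (hp : p = f * Real.log n / Δ) (hp1 : p ≤ 1)
    (Vsamp : Ω → Finset V)
    (hmeas : ∀ v : V, MeasurableSet {ω | v ∈ Vsamp ω})
    (hprob : ∀ v : V, P {ω | v ∈ Vsamp ω} = ENNReal.ofReal p)
    (hindep : iIndepSet (fun v : V => {ω | v ∈ Vsamp ω}) P)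
    (v : V) :
    (P {ω | 6 * f * Real.log n
        ≤ (((G.neighborFinset v).filter (fun u => u ∈ Vsamp ω)).card : ℝ)}).toReal
      ≤ n ^ (-f) :=
  few_sampled_neighbors_general G P Δ f n p hmaxdeg hn hf hp Vsamp hprob hindep v
end

section
/- For all positive integers N, k, ℓ, there exists a finite family H of functions from {1, …, N} to {0, 1}^ℓ with |H| ≤ 2^{k·(ℓ + ⌈log₂ N⌉)} such that, when h is drawn uniformly at random from H, the random variables (h(x))_{x ∈ {1,…,N}} are k-wise independent and each h(x) is uniformly distributed on {0, 1}^ℓ. -/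
open MeasureTheory ProbabilityTheory

/-!
Work in `F = GF(2^m)` with `m = ℓ + ⌈log₂ N⌉`, so that `Fin N` embeds into `F` and `F` projects
`𝔽₂`-linearly onto `𝔽₂^ℓ`. A key is the coefficient vector of a polynomial of degree `< k` over
`F`, and it hashes `x` to the projection of the polynomial's value at `x`. By Lagrange
interpolation, keys ↦ values at any `≤ k` points is a surjective additive homomorphism, and a
surjective homomorphism of finite groups maps the uniform distribution to the uniform one. All
fibres of a homomorphism have the same size, so the uniform distribution on the family `H` of
hash functions is the image of the uniform distribution on keys.
-/

open Finset Function
open scoped ENNReal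

namespace PMF

variable {α β : Type*} [Fintype α] [Nonempty α]

theorem map_uniformOfFintype_of_card_fiber_eq [DecidableEq β] (f : α → β)
    (hf : ∀ a b, #{x | f x = f a} = #{x | f x = f b}) :
    (uniformOfFintype α).map f = uniformOfFinset (univ.image f) (univ_nonempty.image f) := by
  ext b
  simp only [map_apply, tsum_fintype, uniformOfFintype_apply, uniformOfFinset_apply]
  rw [← sum_filter, sum_const, nsmul_eq_mul]
  split_ifs with hb
  · obtain ⟨a, -, rfl⟩ := mem_image.mp hb
    simp_rw [eq_comm (a := f a)]
    have hcard : Fintype.card α = #(univ.image f) * #{x | f x = f a} := by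
      rw [← card_univ, card_eq_sum_card_image f univ, ← smul_eq_mul, ← sum_const]
      refine sum_congr rfl fun b hb => ?_
      obtain ⟨a', -, rfl⟩ := mem_image.mp hb
      exact hf a' a
    have hfiber : (#{x | f x = f a} : ℝ≥0∞) ≠ 0 :=
      Nat.cast_ne_zero.2 (card_pos.2 ⟨a, by simp⟩).ne'
    rw [hcard, Nat.cast_mul, ENNReal.mul_inv (by simp) (by simp), mul_comm, mul_assoc,
      ENNReal.inv_mul_cancel hfiber (by simp), mul_one]
  · rw [filter_false_of_mem, card_empty, Nat.cast_zero, zero_mul]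
    rintro x - rfl
    exact hb (mem_image_of_mem f (mem_univ x))

theorem map_uniformOfFintype_of_surjective [Fintype β] [DecidableEq β] [Nonempty β] (f : α → β)
    (hsurj : Surjective f) (hf : ∀ a b, #{x | f x = f a} = #{x | f x = f b}) :
    (uniformOfFintype α).map f = uniformOfFintype β := by
  ext b
  simp [map_uniformOfFintype_of_card_fiber_eq f hf, uniformOfFinset_apply,
    image_univ_of_surjective hsurj]

theorem map_uniformOfFintype_equiv [Fintype β] [Nonempty β] (e : α ≃ β) :
    (uniformOfFintype α).map e = uniformOfFintype β := by
  classical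
  refine map_uniformOfFintype_of_surjective e e.surjective fun a b => ?_
  rw [card_eq_one.2 ⟨a, by ext; simp⟩, card_eq_one.2 ⟨b, by ext; simp⟩]

theorem toMeasure_uniformOfFintype_pi {ι : Type*} [Fintype ι] [DecidableEq ι] [Fintype β]
    [Nonempty β] [MeasurableSpace β] [MeasurableSingletonClass β] :
    (uniformOfFintype (ι → β)).toMeasure = Measure.pi fun _ => (uniformOfFintype β).toMeasure := by
  refine Measure.ext_of_singleton fun f => ?_
  rw [toMeasure_apply_singleton _ _ (measurableSet_singleton f), Measure.pi_singleton]
  simp_rw [toMeasure_apply_singleton _ _ (measurableSet_singleton _), uniformOfFintype_apply]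
  simp [ENNReal.inv_pow]

end PMF

section KWiseUniform

variable {ι β : Type*} [DecidableEq ι] [Fintype β] [Nonempty β]

def IsKWiseUniform (k : ℕ) (p : PMF (ι → β)) : Prop :=
  ∀ S : Finset ι, #S ≤ k → p.map (fun f (i : S) => f i) = PMF.uniformOfFintype (S → β)

variable [MeasurableSpace β] [MeasurableSingletonClass β] {k : ℕ} {p : PMF (ι → β)}

theorem IsKWiseUniform.toMeasure_map_eval (hp : IsKWiseUniform k p) {S : Finset ι} (hS : #S ≤ k)
    (i : S) : p.toMeasure.map (fun f => f i) = (PMF.uniformOfFintype β).toMeasure := by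
  have hrestrict : Measurable fun (f : ι → β) (j : S) => f j :=
    measurable_pi_lambda _ fun j => measurable_pi_apply _
  rw [show (fun f : ι → β => f i) = (fun g : S → β => g i) ∘ fun f (j : S) => f j from rfl,
    ← Measure.map_map (measurable_pi_apply i) hrestrict, PMF.toMeasure_map _ p hrestrict, hp S hS,
    PMF.toMeasure_uniformOfFintype_pi, (measurePreserving_eval _ i).map_eq]

theorem IsKWiseUniform.kWiseIndepFun (hp : IsKWiseUniform k p) :
    KWiseIndepFun k (fun x (f : ι → β) => f x) p.toMeasure := by
  intro S hS
  rw [iIndepFun_iff_map_fun_eq_pi_map fun i => (measurable_pi_apply _).aemeasurable,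
    PMF.toMeasure_map _ p (measurable_pi_lambda _ fun j => measurable_pi_apply _), hp S hS,
    PMF.toMeasure_uniformOfFintype_pi]
  exact congrArg Measure.pi (funext fun i => (hp.toMeasure_map_eval hS i).symm)

theorem IsKWiseUniform.toMeasure_eval_eq_inv_card (hp : IsKWiseUniform k p) (hk : 0 < k) (x : ι)
    (y : β) : p.toMeasure {f | f x = y} = (Fintype.card β : ℝ≥0∞)⁻¹ := by
  have hx := hp.toMeasure_map_eval (S := {x}) (by rwa [card_singleton])
    ⟨x, mem_singleton_self x⟩
  change p.toMeasure ((fun f => f x) ⁻¹' {y}) = _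
  rw [← Measure.map_apply (measurable_pi_apply x) (measurableSet_singleton y), hx,
    PMF.toMeasure_apply_singleton _ _ (measurableSet_singleton y), PMF.uniformOfFintype_apply]

end KWiseUniform

section AdditiveHash

variable {A ι M β : Type*} [AddCommGroup A] [Fintype A] [AddCommGroup M]

theorem uniformOfFinset_image_eq_map [DecidableEq (ι → β)] (Φ : A →+ (ι → M)) (e : M ≃ β) :
    PMF.uniformOfFinset (univ.image fun a i => e (Φ a i)) (univ_nonempty.image _) =
      (PMF.uniformOfFintype A).map fun a i => e (Φ a i) := by
  classical
  refine (PMF.map_uniformOfFintype_of_card_fiber_eq _ fun a b => ?_).symm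
  have hfiber : ∀ c d, (fun i => e (Φ c i)) = (fun i => e (Φ d i)) ↔ Φ c = Φ d := fun _ _ =>
    e.injective.comp_left.eq_iff
  simp only [hfiber]
  exact AddMonoidHom.card_fiber_eq_of_mem_range Φ ⟨a, rfl⟩ ⟨b, rfl⟩

theorem isKWiseUniform_map_uniformOfFintype [DecidableEq ι] [Fintype M] [Fintype β] [Nonempty β]
    {k : ℕ} (Φ : A →+ (ι → M)) (e : M ≃ β)
    (hΦ : ∀ S : Finset ι, #S ≤ k → Surjective fun a (i : S) => Φ a i) :
    IsKWiseUniform k ((PMF.uniformOfFintype A).map fun a i => e (Φ a i)) := by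
  classical
  intro S hS
  let restrict : A →+ (S → M) := AddMonoidHom.pi fun i : S => (Pi.evalAddMonoidHom _ i.1).comp Φ
  rw [PMF.map_comp]
  change (PMF.uniformOfFintype A).map (Equiv.piCongrRight (fun _ => e) ∘ restrict) = _
  rw [← PMF.map_comp, PMF.map_uniformOfFintype_of_surjective restrict (hΦ S hS)
    fun a b => AddMonoidHom.card_fiber_eq_of_mem_range restrict ⟨a, rfl⟩ ⟨b, rfl⟩,
    PMF.map_uniformOfFintype_equiv]

end AdditiveHash

section PolynomialHash

variable {F ι M : Type*} [Field F]

def coeffEval (k : ℕ) (v : ι → F) : (Fin k → F) →+ (ι → F) where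
  toFun a i := ∑ j, a j * v i ^ (j : ℕ)
  map_zero' := by ext; simp
  map_add' a b := by ext; simp [add_mul, sum_add_distrib]

theorem coeffEval_surjective [Fintype ι] {k : ℕ} {v : ι → F} (hv : Injective v)
    (hk : Fintype.card ι ≤ k) : Surjective (coeffEval k v) := by
  classical
  intro c
  have hdeg : Lagrange.interpolate univ v c ∈ Polynomial.degreeLT F k :=
    Polynomial.mem_degreeLT.2 <| (Lagrange.degree_interpolate_lt c hv.injOn).trans_le
      (by rw [card_univ]; exact_mod_cast hk)
  refine ⟨Polynomial.degreeLTEquiv F k ⟨_, hdeg⟩, funext fun i => ?_⟩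
  rw [← Lagrange.eval_interpolate_at_node c hv.injOn (mem_univ i),
    Polynomial.eval_eq_sum_degreeLTEquiv hdeg]
  rfl

variable [AddCommGroup M]

def polyHash (k : ℕ) (v : ι → F) (π : F →+ M) : (Fin k → F) →+ (ι → M) :=
  (π.compLeft ι).comp (coeffEval k v)

theorem polyHash_restrict_surjective {k : ℕ} {v : ι → F} (hv : Injective v) {π : F →+ M}
    (hπ : Surjective π) (S : Finset ι) (hS : #S ≤ k) :
    Surjective fun a (i : S) => polyHash k v π a i :=
  hπ.comp_left.comp <| coeffEval_surjective (hv.comp Subtype.val_injective) (by simpa using hS)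

end PolynomialHash

theorem exists_linearMap_surjective_of_le_finrank {K V : Type*} [DivisionRing K] [AddCommGroup V]
    [Module K V] [FiniteDimensional K V] {n : ℕ} (hn : n ≤ Module.finrank K V) :
    ∃ π : V →ₗ[K] Fin n → K, Surjective π :=
  ⟨LinearMap.funLeft K K (Fin.castLE hn) ∘ₗ (Module.finBasis K V).equivFun.toLinearMap,
    (LinearMap.funLeft_surjective_of_injective K K _ (Fin.castLE_injective hn)).comp
      (Module.finBasis K V).equivFun.surjective⟩

theorem exists_kwise_independent_hash_family_general (N k ℓ : ℕ) (hk : 0 < k)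
    (hℓ : 0 < ℓ) :
    ∃ (H : Finset (Fin N → (Fin ℓ → Bool))) (hne : H.Nonempty),
      H.card ≤ 2 ^ (k * (ℓ + Nat.clog 2 N)) ∧
      KWiseIndepFun k (fun (x : Fin N) (h : Fin N → (Fin ℓ → Bool)) => h x)
        (PMF.uniformOfFinset H hne).toMeasure ∧
      ∀ (x : Fin N) (y : Fin ℓ → Bool),
        (PMF.uniformOfFinset H hne).toMeasure {h | h x = y} = 1 / 2 ^ ℓ := by
  set m := ℓ + Nat.clog 2 N
  let F := GaloisField 2 m
  let _ : Fintype F := .ofFinite F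
  have hm : m ≠ 0 := by omega
  have hcardF : Fintype.card F = 2 ^ m := by
    rw [← Nat.card_eq_fintype_card, GaloisField.card 2 m hm]
  obtain ⟨v⟩ : Nonempty (Fin N ↪ F) := Function.Embedding.nonempty_of_card_le <| by
    rw [Fintype.card_fin, hcardF]
    exact (Nat.le_pow_clog one_lt_two N).trans (Nat.pow_le_pow_right two_pos (by omega))
  obtain ⟨π, hπ⟩ := exists_linearMap_surjective_of_le_finrank (K := ZMod 2) (V := F) (n := ℓ)
    (by rw [GaloisField.finrank 2 hm]; omega)
  let e : (Fin ℓ → ZMod 2) ≃ (Fin ℓ → Bool) := Fintype.equivOfCardEq (by simp)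
  let Φ := polyHash k v π.toAddMonoidHom
  have hp := isKWiseUniform_map_uniformOfFintype Φ e
    (polyHash_restrict_surjective v.injective hπ)
  rw [← uniformOfFinset_image_eq_map] at hp
  refine ⟨_, _, card_image_le.trans_eq ?_, hp.kWiseIndepFun, fun x y => ?_⟩
  · rw [card_univ, Fintype.card_fun, hcardF, Fintype.card_fin, ← pow_mul, mul_comm]
  · rw [hp.toMeasure_eval_eq_inv_card hk]
    simp

/-- For all positive integers `N, k, ℓ`, there exists a finite family `H` of functions from
`{1, …, N}` (modeled as `Fin N`) to `{0, 1}^ℓ` (modeled as `Fin ℓ → Bool`) with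
`|H| ≤ 2^(k·(ℓ + ⌈log₂ N⌉))` such that, when `h` is drawn uniformly at random from `H`, the
random variables `(h(x))_{x ∈ Fin N}` are `k`-wise independent and each `h(x)` is uniformly
distributed on `{0, 1}^ℓ`. -/
theorem exists_kwise_independent_hash_family (N k ℓ : ℕ) (hN : 0 < N) (hk : 0 < k)
    (hℓ : 0 < ℓ) :
    ∃ (H : Finset (Fin N → (Fin ℓ → Bool))) (hne : H.Nonempty),
      H.card ≤ 2 ^ (k * (ℓ + Nat.clog 2 N)) ∧
      KWiseIndepFun k (fun (x : Fin N) (h : Fin N → (Fin ℓ → Bool)) => h x)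
        (PMF.uniformOfFinset H hne).toMeasure ∧
      ∀ (x : Fin N) (y : Fin ℓ → Bool),
        (PMF.uniformOfFinset H hne).toMeasure {h | h x = y} = 1 / 2 ^ ℓ :=
  exists_kwise_independent_hash_family_general N k ℓ hk hℓ
end
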